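/- Matrix elements of the symmetrized operator 𝐇 = ½(K K† + K† K): with K and K† the linear operators on finitely supported sequences defined on the standard basis (e_n)_{n∈ℕ} of spin-network states by K e_0 = 0, K e_n = (n/2 + 3/2)·e_{n+1} − (n/2 − 1/2)·e_{n−1} for n ≥ 1, K† e_0 = 0, K† e_1 = −(1/2)·e_2, K† e_n = −(n/2)·e_{n+1} + (n/2 + 1)·e_{n−1} for n ≥ 2, one has ½(K(K† e_n) + K†(K e_n)) = C₊(n/2)·e_{n+2} + C₀(n/2)·e_n + C₋(n/2)·e_{n−2} for every n ≥ 1, where C₊(j) = −(j² + 2j + 3/8), C₋(n/2) = 0 for n ∈ {1, 2} and C₋(n/2) = C₊((n−2)/2) for n ≥ 3, C₀(1/2) = 17/8 and C₀(j) = 2j² + 2j + 7/4 for n ≥ 2; moreover ½(K(K† e_0) + K†(K e_0)) = 0. -/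

import Mathlib

/-!
Both `K` and `K†` are ladder operators: they send `e m` to a combination of `e (m + 1)` and
`e (m - 1)`. The composite of two ladder operators therefore sends `e n` to a combination of
`e (n + 2)`, `e n` and `e (n - 2)` whose coefficients are sums of products of ladder
coefficients. The theorem thus reduces to three scalar identities, one per output vector; they
are checked separately for `n = 1`, `n = 2` and `n ≥ 3` because `K` and `K†` have boundary
behaviour at `e 0` and `e 1`.
-/

/-- The spin-network basis vector e_n (spin j = n/2), as a finitely supported sequence. -/
noncomputable def e (n : ℕ) : ℕ →₀ ℂ := Finsupp.single n 1

/-- C₊(n/2) = −((n/2)² + 2·(n/2) + 3/8). -/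
noncomputable def CplusC (n : ℕ) : ℂ := -(((n : ℂ) / 2) ^ 2 + 2 * ((n : ℂ) / 2) + 3 / 8)

/-- C₀(1/2) = 17/8 and C₀(n/2) = 2·(n/2)² + 2·(n/2) + 7/4 for n ≥ 2. -/
noncomputable def CzeroC (n : ℕ) : ℂ :=
  if n = 1 then 17 / 8 else 2 * ((n : ℂ) / 2) ^ 2 + 2 * ((n : ℂ) / 2) + 7 / 4

/-- C₋(n/2) = 0 for n ∈ {1, 2} and C₋(n/2) = C₊((n−2)/2) for n ≥ 3. -/
noncomputable def CminusC (n : ℕ) : ℂ := if n ≤ 2 then 0 else CplusC (n - 2)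

/-- At `m = 0` truncated subtraction makes `v (m - 1) = v 0`. -/
def IsLadder {R M : Type*} [Semiring R] [AddCommMonoid M] [Module R M]
    (A : M →ₗ[R] M) (v : ℕ → M) (up down : ℕ → R) : Prop :=
  ∀ m, A (v m) = up m • v (m + 1) + down m • v (m - 1)

theorem IsLadder.comp_apply {R M : Type*} [CommSemiring R] [AddCommMonoid M] [Module R M]
    {A B : M →ₗ[R] M} {v : ℕ → M} {aUp aDown bUp bDown : ℕ → R}
    (hA : IsLadder A v aUp aDown) (hB : IsLadder B v bUp bDown) {n : ℕ} (hn : 1 ≤ n) :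
    A (B (v n)) = (aUp (n + 1) * bUp n) • v (n + 2)
      + (aDown (n + 1) * bUp n + aUp (n - 1) * bDown n) • v n
      + (aDown (n - 1) * bDown n) • v (n - 2) := by
  have h₁ : n - 1 + 1 = n := Nat.sub_add_cancel hn
  have h₂ : n - 1 - 1 = n - 2 := rfl
  rw [hB, map_add, map_smul, map_smul, hA, hA, h₁, h₂, add_tsub_cancel_right]
  module

/-- Ladder coefficients of `K = Ĥᴱ` (`ham…`) and of `K†` (`adj…`); the `if`s encode
`K e₀ = 0`, `K† e₀ = 0` and the absent `e₀` component of `K† e₁`. -/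
noncomputable def hamUp (m : ℕ) : ℂ := if m = 0 then 0 else (m : ℂ) / 2 + 3 / 2

noncomputable def hamDown (m : ℕ) : ℂ := if m = 0 then 0 else 1 / 2 - (m : ℂ) / 2

noncomputable def adjUp (m : ℕ) : ℂ := -((m : ℂ) / 2)

noncomputable def adjDown (m : ℕ) : ℂ := if m ≤ 1 then 0 else (m : ℂ) / 2 + 1

theorem isLadder_of_ham {K : (ℕ →₀ ℂ) →ₗ[ℂ] (ℕ →₀ ℂ)} (hK0 : K (e 0) = 0)
    (hK : ∀ n : ℕ, 1 ≤ n →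
      K (e n) = ((n : ℂ) / 2 + 3 / 2) • e (n + 1) - ((n : ℂ) / 2 - 1 / 2) • e (n - 1)) :
    IsLadder K e hamUp hamDown := by
  intro m
  rcases Nat.eq_zero_or_pos m with rfl | hm
  · simp [hK0, hamUp, hamDown]
  · rw [hK m hm, hamUp, hamDown, if_neg hm.ne', if_neg hm.ne']
    module

theorem isLadder_of_adj {Kd : (ℕ →₀ ℂ) →ₗ[ℂ] (ℕ →₀ ℂ)} (hKd0 : Kd (e 0) = 0)
    (hKd1 : Kd (e 1) = -(1 / 2 : ℂ) • e 2)
    (hKd : ∀ n : ℕ, 2 ≤ n →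
      Kd (e n) = -((n : ℂ) / 2) • e (n + 1) + ((n : ℂ) / 2 + 1) • e (n - 1)) :
    IsLadder Kd e adjUp adjDown := by
  intro m
  match m with
  | 0 => simp [hKd0, adjUp, adjDown]
  | 1 => simp [hKd1, adjUp, adjDown]
  | m + 2 => rw [hKd (m + 2) (by omega), adjUp, adjDown, if_neg (by omega)]

theorem CplusC_eq {n : ℕ} (hn : 1 ≤ n) :
    CplusC n = (1 / 2 : ℂ) * (hamUp (n + 1) * adjUp n + adjUp (n + 1) * hamUp n) := by
  simp only [CplusC, hamUp, adjUp, if_neg (by omega : n + 1 ≠ 0), if_neg (by omega : n ≠ 0)]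
  push_cast
  ring

theorem CzeroC_eq {n : ℕ} (hn : 1 ≤ n) :
    CzeroC n = (1 / 2 : ℂ) * (hamDown (n + 1) * adjUp n + hamUp (n - 1) * adjDown n
      + (adjDown (n + 1) * hamUp n + adjUp (n - 1) * hamDown n)) := by
  match n, hn with
  | 1, _ => norm_num [CzeroC, hamUp, hamDown, adjUp, adjDown]
  | m + 2, _ =>
    simp only [CzeroC, hamUp, hamDown, adjUp, adjDown, if_neg (by omega : m + 2 ≠ 1),
      if_neg (by omega : m + 2 + 1 ≠ 0), if_neg (by omega : m + 2 ≠ 0), if_neg (by omega : ¬ m + 2 ≤ 1),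
      if_neg (by omega : ¬ m + 2 + 1 ≤ 1), Nat.add_sub_cancel (n := m + 1) (m := 1)]
    push_cast
    ring

theorem CminusC_eq {n : ℕ} (hn : 1 ≤ n) :
    CminusC n = (1 / 2 : ℂ) * (hamDown (n - 1) * adjDown n + adjDown (n - 1) * hamDown n) := by
  match n, hn with
  | 1, _ => norm_num [CminusC, hamDown, adjDown]
  | 2, _ => norm_num [CminusC, hamDown, adjDown]
  | m + 3, _ =>
    simp only [CminusC, CplusC, hamDown, adjDown, if_neg (by omega : ¬ m + 3 ≤ 2),
      if_neg (by omega : m + 3 ≠ 0), if_neg (by omega : ¬ m + 3 ≤ 1),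
      Nat.add_sub_cancel (n := m + 2) (m := 1), Nat.add_sub_cancel (n := m + 1) (m := 2)]
    push_cast
    ring

/-- Matrix elements of the symmetrized operator 𝐇 = ½(K K† + K† K), where K = Ĥᴱ and
K† is its formal adjoint, acting on the spin-network basis vectors e_n. -/
theorem symmetrized_matrix_elements (K Kd : (ℕ →₀ ℂ) →ₗ[ℂ] (ℕ →₀ ℂ))
    (hK0 : K (e 0) = 0)
    (hK : ∀ n : ℕ, 1 ≤ n →
      K (e n) = ((n : ℂ) / 2 + 3 / 2) • e (n + 1) - ((n : ℂ) / 2 - 1 / 2) • e (n - 1))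
    (hKd0 : Kd (e 0) = 0)
    (hKd1 : Kd (e 1) = -(1 / 2 : ℂ) • e 2)
    (hKd : ∀ n : ℕ, 2 ≤ n →
      Kd (e n) = -((n : ℂ) / 2) • e (n + 1) + ((n : ℂ) / 2 + 1) • e (n - 1)) :
    (∀ n : ℕ, 1 ≤ n →
      (1 / 2 : ℂ) • (K (Kd (e n)) + Kd (K (e n))) =
        CplusC n • e (n + 2) + CzeroC n • e n + CminusC n • e (n - 2)) ∧
      (1 / 2 : ℂ) • (K (Kd (e 0)) + Kd (K (e 0))) = 0 := by
  refine ⟨fun n hn => ?_, by simp [hK0, hKd0]⟩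
  have hKL := isLadder_of_ham hK0 hK
  have hKdL := isLadder_of_adj hKd0 hKd1 hKd
  rw [IsLadder.comp_apply hKL hKdL hn, IsLadder.comp_apply hKdL hKL hn, CplusC_eq hn, CzeroC_eq hn, CminusC_eq hn]
  module
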